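/- Let φ : ℝ^{n−1} → ℝ be differentiable with Lipschitz gradient, φ(0) = 0, ∇φ(0) = 0, let Ω = {(x,t) ∈ ℝⁿ : t > φ(x)}, and let F, G, F̃ be the maps of the reflection construction. Suppose δ > 0 is small enough that F̃ is a bijection from 𝓑_δ = B_δ^{n−1}(0) × (−δ, δ) onto its image U with Lipschitz inverse, that F̃(𝓑_δ ∩ {s > 0}) ⊆ Ω and F̃(𝓑_δ ∩ {s < 0}) ⊆ Ωᶜ. Let u be a function on the closure of Ω ∩ U, set v(x,s) = u(F(x,s)) for s > 0, define ṽ(x,s) = v(x,s) for s ≥ 0 and ṽ(x,s) = v(x,−s) for s < 0, and define the reflection ũ(X) = ṽ(F̃⁻¹(X)) for X ∈ U. Then the map Φ : F̃(𝓑_δ ∩ {s < 0}) → closure(Ω), Φ(X) = F(R(F̃⁻¹(X))) where R(x,s) = (x,−s), is Lipschitz (being a composition of Lipschitz maps), extends continuously by the identity to the boundary points F̃(𝓑_δ ∩ {s = 0}) ⊆ ∂Ω, and satisfies ũ(X) = u(Φ(X)) for all X ∈ F̃(𝓑_δ ∩ {s < 0}). -/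

import Mathlib

open MeasureTheory Metric Set Filter
open scoped ENNReal NNReal Topology ContDiff

noncomputable section

abbrev Euc (n : ℕ) := EuclideanSpace ℝ (Fin n)

/-- The standard bump function `η(x) = C e^{1/(|x|²-1)}` for `|x| < 1`, `0` otherwise. -/
def bump (d : ℕ) (C : ℝ) (x : Euc d) : ℝ :=
  if ‖x‖ < 1 then C * Real.exp (1 / (‖x‖ ^ 2 - 1)) else 0

/-- The rescaled mollifier `η_s(x) = s^{-d} η(x/s)`. -/
def bumpS (d : ℕ) (C : ℝ) (s : ℝ) (x : Euc d) : ℝ :=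
  (s ^ d)⁻¹ * bump d C (s⁻¹ • x)

/-- The downward-graph unit normal `ν(x) = (∇φ(x), −1)/√(1 + |∇φ(x)|²)`. -/
def normalVec {d : ℕ} (φ : Euc d → ℝ) (x : Euc d) : Euc d × ℝ :=
  (Real.sqrt (1 + ‖gradient φ x‖ ^ 2))⁻¹ • (gradient φ x, (-1 : ℝ))

/-- The componentwise convolution `(η_s * ν)(x) = ∫ η_s(y) ν(x−y) dy`. -/
def convNormal {d : ℕ} (C : ℝ) (φ : Euc d → ℝ) (s : ℝ) (x : Euc d) : Euc d × ℝ :=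
  ∫ y : Euc d, bumpS d C s y • normalVec φ (x - y)

/-- `F(x,s) = (x, φ(x)) − s (η_s * ν)(x)`. -/
def Fmap {d : ℕ} (C : ℝ) (φ : Euc d → ℝ) (p : Euc d × ℝ) : Euc d × ℝ :=
  ((p.1, φ p.1) : Euc d × ℝ) - p.2 • convNormal C φ p.2 p.1

/-- `G(x,s) = (x, φ(x)) + s (η_s * ν)(x)`. -/
def Gmap {d : ℕ} (C : ℝ) (φ : Euc d → ℝ) (p : Euc d × ℝ) : Euc d × ℝ :=
  ((p.1, φ p.1) : Euc d × ℝ) + p.2 • convNormal C φ p.2 p.1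

/-- The two-sided extension `F̃(x,s)`: `F(x,s)` for `s ≥ 0` (with `F̃(x,0) = (x,φ(x))`)
and `G(x,−s)` for `s < 0`. -/
def Ftil {d : ℕ} (C : ℝ) (φ : Euc d → ℝ) (p : Euc d × ℝ) : Euc d × ℝ :=
  if 0 ≤ p.2 then Fmap C φ p else Gmap C φ (p.1, -p.2)

/-- The standard reflection `R(x,s) = (x,−s)`. -/
def Rrefl {d : ℕ} (p : Euc d × ℝ) : Euc d × ℝ := (p.1, -p.2)

/-- The parameter box `𝓑_δ = B_δ^{d}(0) × (−δ, δ)`. -/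
def paramBox (d : ℕ) (δ : ℝ) : Set (Euc d × ℝ) :=
  (ball (0 : Euc d) δ) ×ˢ Ioo (-δ) δ

/-- The region `Ω = {(x,t) : t > φ(x)}` above the graph of `φ`. -/
def aboveGraph {d : ℕ} (φ : Euc d → ℝ) : Set (Euc d × ℝ) :=
  {q | φ q.1 < q.2}

/-- The even reflection `ṽ(x,s)` of `v(x,s) = u(F(x,s))` across `{s = 0}`. -/
def vTil {d : ℕ} (C : ℝ) (φ : Euc d → ℝ) (u : Euc d × ℝ → ℝ) (p : Euc d × ℝ) : ℝ :=
  if 0 ≤ p.2 then u (Fmap C φ p) else u (Fmap C φ (p.1, -p.2))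

/-- The reflection `ũ(X) = ṽ(F̃⁻¹(X))` of `u` across the graph of `φ`. -/
def uTil {d : ℕ} (C : ℝ) (φ : Euc d → ℝ) (δ : ℝ) (u : Euc d × ℝ → ℝ)
    (X : Euc d × ℝ) : ℝ :=
  vTil C φ u (Function.invFunOn (Ftil C φ) (paramBox d δ) X)

/-- The reflection map `Φ(X) = F(R(F̃⁻¹(X)))`. -/
def PhiMap {d : ℕ} (C : ℝ) (φ : Euc d → ℝ) (δ : ℝ) (X : Euc d × ℝ) : Euc d × ℝ :=
  Fmap C φ (Rrefl (Function.invFunOn (Ftil C φ) (paramBox d δ) X))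

/-! Because `F̃` is injective on `𝓑_δ`, `Φ (F̃ p) = F (R p)` for every `p ∈ 𝓑_δ`, so on the
lower half `Φ = F ∘ R ∘ F̃⁻¹`. After the substitution `y = s z` in the convolution,
`F(x,s) = (x, φ x) - s ∫ η(z) ν(x - s z) dz`; here `φ` is Lipschitz on the ball because its
gradient is, and the integral term is Lipschitz because `ν` is bounded and Lipschitz. Hence `Φ`
is Lipschitz on the image of the closed lower half `{s ≤ 0}`, which contains the boundary
points, where `Φ` is the identity. Finally `Φ (F̃ p) = F̃ (R p)` lies in `F̃(𝓑_δ ∩ {s > 0}) ⊆ Ω`. -/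

section UnitNormal

variable {E : Type*} [NormedAddCommGroup E]

lemma abs_sqrt_one_add_sq_sub_sqrt_one_add_sq_le (a b : ℝ) :
    |√(1 + a ^ 2) - √(1 + b ^ 2)| ≤ |a - b| := by
  -- `√(1 + c²) = |1 + c i|`, so this is the reverse triangle inequality in `ℂ`.
  have hsqrt : ∀ c : ℝ, √(1 + c ^ 2) = ‖(1 : ℂ) + c * Complex.I‖ := fun c => by
    simpa using (Complex.norm_add_mul_I 1 c).symm
  calc |√(1 + a ^ 2) - √(1 + b ^ 2)|
      ≤ ‖((1 : ℂ) + a * Complex.I) - (1 + b * Complex.I)‖ := by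
        rw [hsqrt, hsqrt]; exact abs_norm_sub_norm_le _ _
    _ = |a - b| := by
        rw [add_sub_add_left_eq_sub, ← sub_mul, ← Complex.ofReal_sub, Complex.norm_mul,
          Complex.norm_I, mul_one, Complex.norm_real, Real.norm_eq_abs]

lemma norm_prod_neg_one_le_sqrt (g : E) : ‖(g, (-1 : ℝ))‖ ≤ √(1 + ‖g‖ ^ 2) := by
  rw [Prod.norm_def, norm_neg, norm_one]
  refine max_le ?_ ?_
  · exact Real.le_sqrt_of_sq_le (by linarith)
  · exact Real.le_sqrt_of_sq_le (by nlinarith [sq_nonneg ‖g‖])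

lemma norm_inv_sqrt_smul_prod_neg_one_le_one [NormedSpace ℝ E] (g : E) :
    ‖(√(1 + ‖g‖ ^ 2))⁻¹ • (g, (-1 : ℝ))‖ ≤ 1 := by
  have hpos : 0 < √(1 + ‖g‖ ^ 2) := Real.sqrt_pos.2 (by positivity)
  rw [norm_smul, norm_inv, Real.norm_of_nonneg hpos.le, inv_mul_le_one₀ hpos]
  exact norm_prod_neg_one_le_sqrt g

lemma lipschitzWith_inv_sqrt_smul_prod_neg_one [NormedSpace ℝ E] :
    LipschitzWith 2 (fun g : E => (√(1 + ‖g‖ ^ 2))⁻¹ • (g, (-1 : ℝ))) := by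
  refine LipschitzWith.of_dist_le_mul fun g g' => ?_
  set a := √(1 + ‖g‖ ^ 2)
  set b := √(1 + ‖g'‖ ^ 2)
  have ha : 1 ≤ a := Real.one_le_sqrt.2 (by nlinarith [sq_nonneg ‖g‖])
  have hb : 1 ≤ b := Real.one_le_sqrt.2 (by nlinarith [sq_nonneg ‖g'‖])
  have hsplit : a⁻¹ • (g, (-1 : ℝ)) - b⁻¹ • (g', (-1 : ℝ)) =
      a⁻¹ • (g - g', (0 : ℝ)) + (a⁻¹ - b⁻¹) • (g', (-1 : ℝ)) := by
    ext <;> simp only [Prod.fst_sub, Prod.snd_sub, Prod.smul_fst, Prod.smul_snd, Prod.fst_add,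
      Prod.snd_add] <;> module
  have h₁ : ‖a⁻¹ • (g - g', (0 : ℝ))‖ ≤ ‖g - g'‖ := by
    rw [norm_smul, norm_inv, Real.norm_of_nonneg (by positivity), Prod.norm_def, norm_zero,
      max_eq_left (norm_nonneg _)]
    exact mul_le_of_le_one_left (norm_nonneg _) (inv_le_one_of_one_le₀ ha)
  have h₂ : ‖(a⁻¹ - b⁻¹) • (g', (-1 : ℝ))‖ ≤ ‖g - g'‖ := by
    have hab : |b - a| ≤ ‖g - g'‖ := by
      rw [abs_sub_comm]
      exact (abs_sqrt_one_add_sq_sub_sqrt_one_add_sq_le _ _).trans (abs_norm_sub_norm_le g g')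
    have hB : ‖(g', (-1 : ℝ))‖ ≤ a * b :=
      (norm_prod_neg_one_le_sqrt g').trans (le_mul_of_one_le_left (by positivity) ha)
    rw [inv_sub_inv (by positivity) (by positivity), norm_smul, norm_div, Real.norm_eq_abs,
      Real.norm_of_nonneg (by positivity), div_mul_eq_mul_div, div_le_iff₀ (by positivity)]
    exact mul_le_mul hab hB (norm_nonneg _) (norm_nonneg _)
  rw [dist_eq_norm, dist_eq_norm, hsplit, NNReal.coe_ofNat, two_mul]
  exact (norm_add_le _ _).trans (add_le_add h₁ h₂)

end UnitNormal

lemma norm_normalVec_le_one {d : ℕ} (φ : Euc d → ℝ) (x : Euc d) : ‖normalVec φ x‖ ≤ 1 :=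
  norm_inv_sqrt_smul_prod_neg_one_le_one _

lemma LipschitzWith.normalVec {d : ℕ} {φ : Euc d → ℝ} {K : ℝ≥0}
    (hLip : LipschitzWith K (gradient φ)) : LipschitzWith (2 * K) (normalVec φ) :=
  lipschitzWith_inv_sqrt_smul_prod_neg_one.comp hLip

lemma lipschitzOnWith_ball_of_lipschitzWith_gradient {E : Type*} [NormedAddCommGroup E]
    [InnerProductSpace ℝ E] [CompleteSpace E] {φ : E → ℝ} (hφ : Differentiable ℝ φ) {K : ℝ≥0}
    (hLip : LipschitzWith K (gradient φ)) (x₀ : E) (r : ℝ≥0) :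
    LipschitzOnWith (‖gradient φ x₀‖₊ + K * r) φ (ball x₀ r) := by
  refine (convex_ball x₀ r).lipschitzOnWith_of_nnnorm_fderiv_le (fun x _ => hφ x) fun x hx => ?_
  have hgrad : ‖fderiv ℝ φ x‖₊ = ‖gradient φ x‖₊ :=
    ((InnerProductSpace.toDual ℝ E).symm.nnnorm_map (fderiv ℝ φ x)).symm
  calc ‖fderiv ℝ φ x‖₊ = ‖gradient φ x‖₊ := hgrad
    _ ≤ ‖gradient φ x₀‖₊ + nndist (gradient φ x) (gradient φ x₀) := by
        rw [nndist_eq_nnnorm]; exact nnnorm_le_nnnorm_add_nnnorm_sub' _ _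
    _ ≤ ‖gradient φ x₀‖₊ + K * r := by
        gcongr
        refine (hLip.nndist_le x x₀).trans (mul_le_mul_right ?_ _)
        rw [← NNReal.coe_le_coe, coe_nndist]; exact (mem_ball.1 hx).le

section RescaledAverage

variable {E F : Type*} [NormedAddCommGroup E] [NormedSpace ℝ E] [NormedAddCommGroup F]
  [NormedSpace ℝ F] {ν : E → F} {B K : ℝ≥0}

lemma norm_smul_comp_sub_smul_sub_le (hνB : ∀ x, ‖ν x‖ ≤ B) (hνK : LipschitzWith K ν)
    {δ : ℝ} {x y z : E} {s t : ℝ} (hz : ‖z‖ ≤ 1) (ht : |t| ≤ δ) :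
    ‖s • ν (x - s • z) - t • ν (y - t • z)‖ ≤ (B + 2 * K * δ) * dist (x, s) (y, t) := by
  have hxy : ‖x - y‖ ≤ dist (x, s) (y, t) := by
    rw [Prod.dist_eq, ← dist_eq_norm]; exact le_max_left _ _
  have hst : |s - t| ≤ dist (x, s) (y, t) := by
    rw [Prod.dist_eq, ← Real.dist_eq]; exact le_max_right _ _
  have harg : ‖(x - s • z) - (y - t • z)‖ ≤ 2 * dist (x, s) (y, t) := by
    rw [show (x - s • z) - (y - t • z) = (x - y) - (s - t) • z by module]
    calc _ ≤ ‖x - y‖ + |s - t| * ‖z‖ := by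
          rw [← Real.norm_eq_abs, ← norm_smul]; exact norm_sub_le _ _
      _ ≤ 2 * dist (x, s) (y, t) := by
          nlinarith [abs_nonneg (s - t), mul_le_of_le_one_right (abs_nonneg (s - t)) hz]
  have h₁ : ‖(s - t) • ν (x - s • z)‖ ≤ B * dist (x, s) (y, t) := by
    rw [norm_smul, Real.norm_eq_abs, mul_comm]
    exact mul_le_mul (hνB _) hst (abs_nonneg _) B.coe_nonneg
  have h₂ : ‖t • (ν (x - s • z) - ν (y - t • z))‖ ≤ 2 * K * δ * dist (x, s) (y, t) := by
    rw [norm_smul, Real.norm_eq_abs, ← dist_eq_norm]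
    calc |t| * dist (ν (x - s • z)) (ν (y - t • z))
        ≤ δ * (K * (2 * dist (x, s) (y, t))) := by
          refine mul_le_mul ht ((hνK.dist_le_mul _ _).trans ?_) dist_nonneg
            ((abs_nonneg t).trans ht)
          rw [dist_eq_norm]; exact mul_le_mul_of_nonneg_left harg K.coe_nonneg
      _ = 2 * K * δ * dist (x, s) (y, t) := by ring
  calc _ = ‖(s - t) • ν (x - s • z) + t • (ν (x - s • z) - ν (y - t • z))‖ := by
        congr 1; module
    _ ≤ _ := (norm_add_le _ _).trans (add_le_add h₁ h₂)
    _ = _ := by ring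

variable [MeasurableSpace E] [OpensMeasurableSpace E] [SecondCountableTopology E]
  {μ : Measure E} {η : E → ℝ}

lemma lipschitzOnWith_smul_integral_smul_comp_sub_smul (hη0 : ∀ z, 0 ≤ η z)
    (hη_supp : Function.support η ⊆ closedBall 0 1) (hη1 : ∫ z, η z ∂μ = 1)
    (hνB : ∀ x, ‖ν x‖ ≤ B) (hνK : LipschitzWith K ν) (δ : ℝ≥0) :
    LipschitzOnWith (B + 2 * K * δ) (fun p : E × ℝ => p.2 • ∫ z, η z • ν (p.1 - p.2 • z) ∂μ)
      {p | |p.2| ≤ δ} := by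
  have hη : Integrable η μ := Integrable.of_integral_ne_zero (by rw [hη1]; exact one_ne_zero)
  have hint : ∀ (x : E) (s : ℝ), Integrable (fun z => s • (η z • ν (x - s • z))) μ :=
    fun x s => by
      have hν : Continuous fun z => ν (x - s • z) :=
        hνK.continuous.comp (continuous_const.sub (continuous_const_smul s))
      exact (hη.smul_bdd B hν.aestronglyMeasurable (Eventually.of_forall fun _ => hνB _)).smul s
  refine LipschitzOnWith.of_dist_le_mul fun ⟨x, s⟩ _ ⟨y, t⟩ ht => ?_
  rw [dist_eq_norm, ← integral_smul, ← integral_smul, ← integral_sub (hint x s) (hint y t)]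
  calc _ ≤ ∫ z, η z * ((B + 2 * K * δ) * dist (x, s) (y, t)) ∂μ := by
        refine norm_integral_le_of_norm_le (hη.mul_const _) (Eventually.of_forall fun z => ?_)
        by_cases hz : η z = 0
        · simp [hz]
        rw [smul_comm s, smul_comm t, ← smul_sub, norm_smul, Real.norm_of_nonneg (hη0 z)]
        exact mul_le_mul_of_nonneg_left (norm_smul_comp_sub_smul_sub_le hνB hνK
          (mem_closedBall_zero_iff.1 (hη_supp hz)) ht) (hη0 z)
    _ = _ := by rw [integral_mul_const, hη1, one_mul]; push_cast; rfl

end RescaledAverage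

lemma LipschitzOnWith.congr {α β : Type*} [PseudoEMetricSpace α] [PseudoEMetricSpace β]
    {K : ℝ≥0} {f g : α → β} {s : Set α} (hf : LipschitzOnWith K f s) (h : EqOn f g s) :
    LipschitzOnWith K g s := fun x hx y hy => by
  rw [← h hx, ← h hy]; exact hf hx hy

section Reflection

variable {d : ℕ} {C : ℝ} {φ : Euc d → ℝ}

lemma bump_nonneg (hC : 0 ≤ C) (x : Euc d) : 0 ≤ bump d C x := by
  unfold bump; split_ifs <;> positivity

lemma support_bump_subset : Function.support (bump d C) ⊆ closedBall 0 1 := fun x hx => by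
  by_contra h
  exact hx (if_neg fun h' => h (mem_closedBall_zero_iff.2 h'.le))

lemma convNormal_eq_integral_bump_smul (φ : Euc d → ℝ) (x : Euc d) {s : ℝ} (hs : 0 < s) :
    convNormal C φ s x = ∫ z, bump d C z • normalVec φ (x - s • z) := by
  set f : Euc d → Euc d × ℝ := fun z => bump d C z • normalVec φ (x - s • z)
  have h : ∀ y : Euc d, bumpS d C s y • normalVec φ (x - y) = (s ^ d)⁻¹ • f (s⁻¹ • y) :=
    fun y => by simp only [f, bumpS, smul_inv_smul₀ hs.ne', mul_smul]
  rw [convNormal, funext h, integral_smul, Measure.integral_comp_inv_smul_of_nonneg _ _ hs.le,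
    finrank_euclideanSpace_fin, smul_smul, inv_mul_cancel₀ (pow_ne_zero d hs.ne'), one_smul]

lemma Fmap_eq_of_nonneg (φ : Euc d → ℝ) (x : Euc d) {s : ℝ} (hs : 0 ≤ s) :
    Fmap C φ (x, s) = (x, φ x) - s • ∫ z, bump d C z • normalVec φ (x - s • z) := by
  rcases hs.eq_or_lt with rfl | hs
  · simp [Fmap]
  · rw [Fmap, convNormal_eq_integral_bump_smul φ x hs]

lemma exists_lipschitzOnWith_Fmap (hφ : Differentiable ℝ φ) {K : ℝ≥0}
    (hLip : LipschitzWith K (gradient φ)) (hC : 0 ≤ C) (hnorm : ∫ x : Euc d, bump d C x = 1)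
    (δ : ℝ) : ∃ L, LipschitzOnWith L (Fmap C φ) (ball 0 δ ×ˢ Icc 0 δ) := by
  set r := δ.toNNReal
  have hφ_fst : LipschitzOnWith (‖gradient φ 0‖₊ + K * r) (fun p : Euc d × ℝ => φ p.1)
      (ball 0 r ×ˢ univ) := by
    have := (lipschitzOnWith_ball_of_lipschitzWith_gradient hφ hLip 0 r).comp
      LipschitzWith.prod_fst.lipschitzOnWith fun p (hp : p ∈ ball 0 r ×ˢ (univ : Set ℝ)) => hp.1
    rw [mul_one] at this
    exact this
  have hgraph := LipschitzWith.prod_fst.lipschitzOnWith.prodMk hφ_fst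
  have hshift := lipschitzOnWith_smul_integral_smul_comp_sub_smul (B := 1) (bump_nonneg hC)
    support_bump_subset hnorm (fun x => by simpa using norm_normalVec_le_one φ x)
    hLip.normalVec r
  have hsub := (hgraph.mono fun p (hp : p ∈ ball 0 δ ×ˢ Icc 0 δ) =>
    ⟨ball_subset_ball (Real.le_coe_toNNReal δ) hp.1, trivial⟩).sub (hshift.mono fun p hp =>
      (abs_of_nonneg hp.2.1).trans_le (hp.2.2.trans (Real.le_coe_toNNReal δ)))
  exact ⟨_, hsub.congr fun p hp => (Fmap_eq_of_nonneg φ p.1 hp.2.1).symm⟩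

variable {δ : ℝ}

lemma Ftil_of_nonneg {p : Euc d × ℝ} (hp : 0 ≤ p.2) : Ftil C φ p = Fmap C φ p := if_pos hp

lemma PhiMap_Ftil (hinj : InjOn (Ftil C φ) (paramBox d δ)) {p : Euc d × ℝ}
    (hp : p ∈ paramBox d δ) : PhiMap C φ δ (Ftil C φ p) = Fmap C φ (Rrefl p) := by
  rw [PhiMap, hinj.leftInvOn_invFunOn hp]

lemma uTil_Ftil_of_neg (u : Euc d × ℝ → ℝ) (hinj : InjOn (Ftil C φ) (paramBox d δ))
    {p : Euc d × ℝ} (hp : p ∈ paramBox d δ) (hneg : p.2 < 0) :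
    uTil C φ δ u (Ftil C φ p) = u (Fmap C φ (Rrefl p)) := by
  rw [uTil, hinj.leftInvOn_invFunOn hp, vTil, if_neg hneg.not_ge, Rrefl]

lemma Rrefl_mem_paramBox {p : Euc d × ℝ} (hp : p ∈ paramBox d δ) : Rrefl p ∈ paramBox d δ :=
  ⟨hp.1, neg_lt_neg hp.2.2, neg_lt.1 hp.2.1⟩

lemma exists_lipschitzOnWith_PhiMap (hφ : Differentiable ℝ φ) {K : ℝ≥0}
    (hLip : LipschitzWith K (gradient φ)) (hC : 0 ≤ C) (hnorm : ∫ x : Euc d, bump d C x = 1)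
    (hinj : InjOn (Ftil C φ) (paramBox d δ)) {Kinv : ℝ≥0}
    (hinv : LipschitzOnWith Kinv (Function.invFunOn (Ftil C φ) (paramBox d δ))
      (Ftil C φ '' paramBox d δ)) :
    ∃ L, LipschitzOnWith L (PhiMap C φ δ) (Ftil C φ '' (paramBox d δ ∩ {p | p.2 ≤ 0})) := by
  obtain ⟨L, hL⟩ := exists_lipschitzOnWith_Fmap hφ hLip hC hnorm δ
  have hinv_maps : MapsTo (Function.invFunOn (Ftil C φ) (paramBox d δ))
      (Ftil C φ '' (paramBox d δ ∩ {p | p.2 ≤ 0})) (paramBox d δ ∩ {p | p.2 ≤ 0}) := by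
    rintro _ ⟨p, hp, rfl⟩
    rwa [hinj.leftInvOn_invFunOn hp.1]
  have hR_maps : MapsTo Rrefl (paramBox d δ ∩ {p | p.2 ≤ 0}) (ball 0 δ ×ˢ Icc 0 δ) :=
    fun p hp => ⟨hp.1.1, neg_nonneg.2 hp.2, (Rrefl_mem_paramBox hp.1).2.2.le⟩
  have hR : LipschitzWith 1 (Rrefl : Euc d × ℝ → Euc d × ℝ) :=
    (isometry_id.prodMap isometry_neg).lipschitz
  exact ⟨_, (hL.comp hR.lipschitzOnWith hR_maps).comp
    (hinv.mono (image_mono inter_subset_left)) hinv_maps⟩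

end Reflection

theorem statement_15_general (d : ℕ) (φ : Euc d → ℝ) (hφ : Differentiable ℝ φ)
    (Kgrad : ℝ≥0) (hLip : LipschitzWith Kgrad (gradient φ))
    (C : ℝ) (hC : 0 < C) (hnorm : ∫ x : Euc d, bump d C x = 1)
    (δ : ℝ)
    (hinj : InjOn (Ftil C φ) (paramBox d δ))
    (Kinv : ℝ≥0)
    (hinv : LipschitzOnWith Kinv (Function.invFunOn (Ftil C φ) (paramBox d δ))
      (Ftil C φ '' paramBox d δ))
    (hplus : Ftil C φ '' (paramBox d δ ∩ {p | 0 < p.2}) ⊆ aboveGraph φ)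
    (u : Euc d × ℝ → ℝ) :
    (∃ c : ℝ≥0, LipschitzOnWith c (PhiMap C φ δ)
        (Ftil C φ '' (paramBox d δ ∩ {p | p.2 < 0}))) ∧
    (∀ X ∈ Ftil C φ '' (paramBox d δ ∩ {p | p.2 < 0}),
        PhiMap C φ δ X ∈ closure (aboveGraph φ)) ∧
    (∀ x₀ ∈ ball (0 : Euc d) δ,
        Tendsto (PhiMap C φ δ)
          (𝓝[Ftil C φ '' (paramBox d δ ∩ {p | p.2 < 0})] (Ftil C φ (x₀, 0)))
          (𝓝 (Ftil C φ (x₀, 0)))) ∧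
    (∀ X ∈ Ftil C φ '' (paramBox d δ ∩ {p | p.2 < 0}),
        uTil C φ δ u X = u (PhiMap C φ δ X)) := by
  obtain ⟨L, hL⟩ := exists_lipschitzOnWith_PhiMap hφ hLip hC.le hnorm hinj hinv
  have hlower : Ftil C φ '' (paramBox d δ ∩ {p | p.2 < 0}) ⊆
      Ftil C φ '' (paramBox d δ ∩ {p | p.2 ≤ 0}) :=
    image_mono (inter_subset_inter_right _ fun p (hp : p.2 < 0) => hp.le)
  refine ⟨⟨L, hL.mono hlower⟩, ?_, fun x₀ hx₀ => ?_, ?_⟩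
  · rintro _ ⟨p, hp, rfl⟩
    rw [PhiMap_Ftil hinj hp.1, ← Ftil_of_nonneg (neg_nonneg.2 hp.2.le)]
    have hRp : Rrefl p ∈ paramBox d δ ∩ {p | 0 < p.2} :=
      ⟨Rrefl_mem_paramBox hp.1, show 0 < -p.2 from neg_pos.2 hp.2⟩
    exact subset_closure (hplus (mem_image_of_mem _ hRp))
  · have h₀ : (x₀, (0 : ℝ)) ∈ paramBox d δ ∩ {p | p.2 ≤ 0} :=
      ⟨⟨hx₀, neg_lt_zero.2 (pos_of_mem_ball hx₀), pos_of_mem_ball hx₀⟩, le_refl (0 : ℝ)⟩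
    have hfix : PhiMap C φ δ (Ftil C φ (x₀, 0)) = Ftil C φ (x₀, 0) := by
      rw [PhiMap_Ftil hinj h₀.1, Rrefl, neg_zero, Ftil_of_nonneg le_rfl]
    have := (hL.continuousOn _ (mem_image_of_mem _ h₀)).mono hlower
    rwa [ContinuousWithinAt, hfix] at this
  · rintro _ ⟨p, hp, rfl⟩
    rw [uTil_Ftil_of_neg u hinj hp.1 hp.2, PhiMap_Ftil hinj hp.1]

/-- In the reflection construction (with `φ(0) = 0`, `∇φ(0) = 0`, and
`δ > 0` small enough that `F̃` is a bijection from `𝓑_δ` onto its image `U` with Lipschitz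
inverse, sending `{s > 0}` into `Ω` and `{s < 0}` into `Ωᶜ`), the map
`Φ(X) = F(R(F̃⁻¹(X)))` on `U⁻ = F̃(𝓑_δ ∩ {s < 0})` is Lipschitz with values in
`closure Ω`, extends continuously by the identity at the boundary points
`F̃(𝓑_δ ∩ {s = 0})`, and satisfies `ũ(X) = u(Φ(X))` on `U⁻`. -/
theorem statement_15 (d : ℕ) (φ : Euc d → ℝ) (hφ : Differentiable ℝ φ)
    (Kgrad : ℝ≥0) (hLip : LipschitzWith Kgrad (gradient φ))
    (hφ0 : φ 0 = 0) (hgrad0 : gradient φ 0 = 0)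
    (C : ℝ) (hC : 0 < C) (hnorm : ∫ x : Euc d, bump d C x = 1)
    (δ : ℝ) (hδ : 0 < δ)
    (hinj : InjOn (Ftil C φ) (paramBox d δ))
    (Kinv : ℝ≥0)
    (hinv : LipschitzOnWith Kinv (Function.invFunOn (Ftil C φ) (paramBox d δ))
      (Ftil C φ '' paramBox d δ))
    (hplus : Ftil C φ '' (paramBox d δ ∩ {p | 0 < p.2}) ⊆ aboveGraph φ)
    (hminus : Ftil C φ '' (paramBox d δ ∩ {p | p.2 < 0}) ⊆ (aboveGraph φ)ᶜ)
    (u : Euc d × ℝ → ℝ) :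
    (∃ c : ℝ≥0, LipschitzOnWith c (PhiMap C φ δ)
        (Ftil C φ '' (paramBox d δ ∩ {p | p.2 < 0}))) ∧
    (∀ X ∈ Ftil C φ '' (paramBox d δ ∩ {p | p.2 < 0}),
        PhiMap C φ δ X ∈ closure (aboveGraph φ)) ∧
    (∀ x₀ ∈ ball (0 : Euc d) δ,
        Tendsto (PhiMap C φ δ)
          (𝓝[Ftil C φ '' (paramBox d δ ∩ {p | p.2 < 0})] (Ftil C φ (x₀, 0)))
          (𝓝 (Ftil C φ (x₀, 0)))) ∧
    (∀ X ∈ Ftil C φ '' (paramBox d δ ∩ {p | p.2 < 0}),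
        uTil C φ δ u X = u (PhiMap C φ δ X)) :=
  statement_15_general d φ hφ Kgrad hLip C hC hnorm δ hinj Kinv hinv hplus u
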